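/- arXiv:1403.6445 — 3 statements merged into one kernel-verified Lean document; each statement's English description precedes it below -/
import Mathlib

section
/- For s ∈ [0,1), define f_s : (0,1) → ℝ by f_s(r) = (1/√(1−s²)) · (r/√(r²−s²)) · 𝟙_{(s,1)}(r). Then for every h ∈ (0,1), the family (f_s)_{0 ≤ s ≤ 1−h} is uniformly bounded in L^{3/2}(0,1); that is, sup_{0 ≤ s ≤ 1−h} ∫₀¹ f_s(r)^{3/2} dr < ∞. -/
/-!
For `0 ≤ s ≤ 1 - h` we have `1 - s² ≥ h` and `r² - s² ≥ r (r - s)`, so on `(s, 1]` the density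
satisfies `f_s(r)² ≤ (h (r - s))⁻¹`. Hence `f_s ^ p ≤ (h (r - s)) ^ (-p/2)`, whose integral over
`(s, 1]` is at most `h ^ (-p/2) / (1 - p/2)` as soon as `p < 2`.
-/

open MeasureTheory Set Real

noncomputable def abelDensity (s r : ℝ) : ℝ :=
  if s < r then r / (√(1 - s ^ 2) * √(r ^ 2 - s ^ 2)) else 0

lemma abelDensity_nonneg {s : ℝ} (hs : 0 ≤ s) (r : ℝ) : 0 ≤ abelDensity s r := by
  unfold abelDensity
  split_ifs with hsr
  · exact div_nonneg (hs.trans hsr.le) (by positivity)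
  · exact le_rfl

lemma abelDensity_sq_le {h s r : ℝ} (hh : 0 < h) (hhs : h ≤ 1 - s ^ 2) (hs : 0 ≤ s)
    (hsr : s < r) (hr : r ≤ 1) : abelDensity s r ^ 2 ≤ (h * (r - s))⁻¹ := by
  have hr0 : 0 < r := hs.trans_lt hsr
  have hrs : 0 < r - s := sub_pos.2 hsr
  -- `r ^ 2 - s ^ 2 = (r - s) (r + s) ≥ (r - s) r` and `r ≤ 1`
  calc abelDensity s r ^ 2 = r ^ 2 / ((1 - s ^ 2) * (r ^ 2 - s ^ 2)) := by
        rw [abelDensity, if_pos hsr, div_pow, mul_pow, sq_sqrt (by linarith),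
          sq_sqrt (by nlinarith)]
    _ ≤ r ^ 2 / (h * ((r - s) * r)) := by
        gcongr
        all_goals nlinarith
    _ = r / (h * (r - s)) := by field_simp
    _ ≤ 1 / (h * (r - s)) := by gcongr
    _ = (h * (r - s))⁻¹ := one_div _

lemma abelDensity_rpow_le {h s r p : ℝ} (hh : 0 < h) (hhs : h ≤ 1 - s ^ 2) (hs : 0 ≤ s)
    (hsr : s < r) (hr : r ≤ 1) (hp : 0 ≤ p) :
    abelDensity s r ^ p ≤ (h * (r - s)) ^ (-(p / 2)) := by
  have hx : 0 ≤ h * (r - s) := by nlinarith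
  calc abelDensity s r ^ p = (abelDensity s r ^ 2) ^ (p / 2) := by
        rw [← rpow_natCast_mul (abelDensity_nonneg hs r)]; ring_nf
    _ ≤ (h * (r - s))⁻¹ ^ (p / 2) :=
        rpow_le_rpow (by positivity) (abelDensity_sq_le hh hhs hs hsr hr) (by positivity)
    _ = (h * (r - s)) ^ (-(p / 2)) := by rw [inv_rpow hx, rpow_neg hx]

lemma intervalIntegral_eq_of_eqOn_Ioc_zero {E : Type*} [NormedAddCommGroup E] [NormedSpace ℝ E]
    {f : ℝ → E} {μ : Measure ℝ} {a b c : ℝ} (hac : a ≤ c) (hcb : c ≤ b)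
    (hf : ∀ x ∈ Ioc a c, f x = 0) : ∫ x in a..b, f x ∂μ = ∫ x in c..b, f x ∂μ := by
  rw [intervalIntegral.integral_of_le (hac.trans hcb), intervalIntegral.integral_of_le hcb]
  refine setIntegral_eq_of_subset_of_forall_sdiff_eq_zero measurableSet_Ioc
    (Ioc_subset_Ioc_left hac) fun x hx => hf x ⟨hx.1.1, ?_⟩
  exact not_lt.1 fun hcx => hx.2 ⟨hcx, hx.1.2⟩

lemma integral_sub_rpow {a b p : ℝ} (hp : -1 < p) :
    ∫ x in a..b, (x - a) ^ p = (b - a) ^ (p + 1) / (p + 1) := by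
  rw [intervalIntegral.integral_comp_sub_right (· ^ p), sub_self,
    integral_rpow (Or.inl hp), zero_rpow (by linarith), sub_zero]

lemma integral_abelDensity_rpow_le {h s p : ℝ} (hh : 0 < h) (hhs : h ≤ 1 - s ^ 2) (hs : 0 ≤ s)
    (hp : 0 < p) (hp2 : p < 2) :
    ∫ r in (0 : ℝ)..1, abelDensity s r ^ p
      ≤ h ^ (-(p / 2)) * ((1 - s) ^ (1 - p / 2) / (1 - p / 2)) := by
  have hs1 : s ≤ 1 := by nlinarith
  have hexp : -1 < -(p / 2) := by linarith
  have hvanish : ∀ r ∈ Ioc 0 s, abelDensity s r ^ p = 0 := fun r hr => by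
    rw [abelDensity, if_neg hr.2.not_gt, zero_rpow hp.ne']
  calc ∫ r in (0 : ℝ)..1, abelDensity s r ^ p = ∫ r in s..1, abelDensity s r ^ p :=
        intervalIntegral_eq_of_eqOn_Ioc_zero hs hs1 hvanish
    _ ≤ ∫ r in s..1, h ^ (-(p / 2)) * (r - s) ^ (-(p / 2)) := by
        rw [intervalIntegral.integral_of_le hs1, intervalIntegral.integral_of_le hs1]
        refine integral_mono_of_nonneg ?_ ?_ ?_
        · exact Filter.Eventually.of_forall fun r => rpow_nonneg (abelDensity_nonneg hs r) p
        · have hint := (intervalIntegral.intervalIntegrable_rpow' (a := 0) (b := 1 - s)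
            hexp).comp_sub_right s
          simp only [zero_add, sub_add_cancel] at hint
          exact hint.1.const_mul _
        · filter_upwards [ae_restrict_mem measurableSet_Ioc] with r hr
          rw [← mul_rpow hh.le (sub_nonneg.2 hr.1.le)]
          exact abelDensity_rpow_le hh hhs hs hr.1 hr.2 hp.le
    _ = h ^ (-(p / 2)) * ((1 - s) ^ (1 - p / 2) / (1 - p / 2)) := by
        rw [intervalIntegral.integral_const_mul, integral_sub_rpow hexp]
        ring_nf

theorem stmt_6 (h : ℝ) (hh : h ∈ Set.Ioo (0:ℝ) 1) :
    ∃ M : ℝ, ∀ s ∈ Set.Icc (0:ℝ) (1 - h),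
      (∫ r in (0:ℝ)..1,
        (if s < r then r / (Real.sqrt (1 - s^2) * Real.sqrt (r^2 - s^2)) else 0) ^ (3/2 : ℝ))
        ≤ M := by
  obtain ⟨hh0, -⟩ := hh
  refine ⟨h ^ (-(3 / 4 : ℝ)) * 4, fun s ⟨hs0, hs1⟩ => ?_⟩
  have hhs : h ≤ 1 - s ^ 2 := by nlinarith
  have hroot : (1 - s) ^ (1 / 4 : ℝ) ≤ 1 := rpow_le_one (by linarith) (by linarith) (by norm_num)
  calc _ = ∫ r in (0 : ℝ)..1, abelDensity s r ^ (3 / 2 : ℝ) := rfl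
    _ ≤ h ^ (-(3 / 4 : ℝ)) * ((1 - s) ^ (1 / 4 : ℝ) / (1 / 4)) := by
        convert integral_abelDensity_rpow_le hh0 hhs hs0 (p := 3 / 2) (by norm_num) (by norm_num)
          using 3 <;> norm_num
    _ ≤ h ^ (-(3 / 4 : ℝ)) * 4 := by gcongr; linarith
end

section
/- Let g : (0,1] → ℝ be defined by g(y) = √(1−y²) − log((1+√(1−y²))/y). Then g is increasing on (0,1], g(1) = 0, g(y) < 0 for y ∈ (0,1), and as h → 0⁺, g(1−h) = −(2√2/3) h^{3/2} + o(h^{3/2}). -/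
open Asymptotics Topology

/-- The function appearing in Kapteyn's inequality. -/
noncomputable def gKapteyn (y : ℝ) : ℝ :=
  Real.sqrt (1 - y^2) - Real.log ((1 + Real.sqrt (1 - y^2)) / y)

/-!
With `s = √(1 - y²)` one has `g y = s - log (1 + s) + log y`, whose derivative is `s / y > 0`;
together with `g 1 = 0` this gives monotonicity and the sign. Near `y = 1` put `y = 1 - h`, so
`s² = 2h - h²`. Expanding `log (1 + s)` to third order and `log (1 - h)` to first order, the terms
of order `h` cancel and `g (1 - h) = -s³ / 3 + O(h²)`, while `s³ = (2h)^{3/2} + O(h²)`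
because `(2h)^{3/2} - s³ ≤ 3 √(2h) (2h - s²) = 3 √(2h) h²`.
-/

open Real Filter Set

lemma isLittleO_rpow_rpow_nhdsGT_zero {p q : ℝ} (hpq : p < q) :
    (fun x : ℝ => x ^ q) =o[𝓝[>] 0] fun x => x ^ p := by
  have hlim : Tendsto (fun x : ℝ => x ^ (q - p)) (𝓝[>] 0) (𝓝 0) := by
    have := (continuousAt_rpow_const 0 (q - p) (Or.inr (sub_pos.2 hpq).le)).tendsto
    simpa [zero_rpow (sub_pos.2 hpq).ne'] using this.mono_left nhdsWithin_le_nhds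
  refine (((isBigO_refl (fun x : ℝ => x ^ p) _).mul_isLittleO
    (isLittleO_one_iff ℝ |>.2 hlim)).congr' ?_ ?_)
  · filter_upwards [self_mem_nhdsWithin] with x hx
    rw [← rpow_add hx, add_sub_cancel]
  · simp

lemma abs_log_one_add_sub_le {s : ℝ} (hs0 : 0 ≤ s) (hs : s ≤ 1 / 2) :
    |log (1 + s) - (s - s ^ 2 / 2 + s ^ 3 / 3)| ≤ 2 * s ^ 4 := by
  have h := abs_log_sub_add_sum_range_le (x := -s) (by rw [abs_neg, abs_of_nonneg hs0]; linarith) 3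
  simp only [Finset.sum_range_succ, Finset.sum_range_zero, abs_neg, abs_of_nonneg hs0,
    sub_neg_eq_add] at h
  calc _ = |-s ^ (0 + 1) / (0 + 1) + (-s) ^ (1 + 1) / (1 + 1) + (-s) ^ (2 + 1) / (2 + 1)
        + log (1 + s)| := by ring_nf
    _ ≤ s ^ 4 / (1 - s) := by simpa using h
    _ ≤ 2 * s ^ 4 := by rw [div_le_iff₀ (by linarith)]; nlinarith [pow_nonneg hs0 4]

lemma abs_log_one_sub_add_le {h : ℝ} (h0 : 0 ≤ h) (h1 : h ≤ 1 / 2) :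
    |log (1 - h) + h| ≤ 2 * h ^ 2 := by
  have e := abs_log_sub_add_sum_range_le (x := h) (by rw [abs_of_nonneg h0]; linarith) 1
  simp only [Finset.sum_range_one, abs_of_nonneg h0] at e
  calc _ = |h ^ (0 + 1) / (0 + 1) + log (1 - h)| := by ring_nf
    _ ≤ h ^ 2 / (1 - h) := by simpa using e
    _ ≤ 2 * h ^ 2 := by rw [div_le_iff₀ (by linarith)]; nlinarith [sq_nonneg h]

lemma pow_three_sub_pow_three_le {a b : ℝ} (hb : 0 ≤ b) (hba : b ≤ a) :
    a ^ 3 - b ^ 3 ≤ 3 * a * (a ^ 2 - b ^ 2) := by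
  nlinarith [mul_nonneg (sub_nonneg.2 hba) (by nlinarith : 0 ≤ 2 * a ^ 2 + 2 * a * b - b ^ 2)]

lemma two_mul_sqrt_two_mul_rpow_three_halves {h : ℝ} (h0 : 0 ≤ h) :
    2 * √2 * h ^ (3 / 2 : ℝ) = √(2 * h) ^ 3 := by
  have h32 : h ^ (3 / 2 : ℝ) = √h ^ 3 := by
    rw [sqrt_eq_rpow, ← rpow_natCast, ← rpow_mul h0]
    norm_num
  rw [h32, sqrt_mul zero_le_two, mul_pow, pow_succ (√2), sq_sqrt zero_le_two]

lemma gKapteyn_eq {y : ℝ} (hy : 0 < y) :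
    gKapteyn y = √(1 - y ^ 2) - log (1 + √(1 - y ^ 2)) + log y := by
  rw [gKapteyn, log_div (by positivity) hy.ne']
  ring

lemma hasDerivAt_gKapteyn {y : ℝ} (hy : y ∈ Ioo (0 : ℝ) 1) :
    HasDerivAt gKapteyn (√(1 - y ^ 2) / y) y := by
  obtain ⟨hy0, hy1⟩ := hy
  have hpos : 0 < 1 - y ^ 2 := by nlinarith
  have hs : HasDerivAt (fun x : ℝ => √(1 - x ^ 2)) (-(2 * y) / (2 * √(1 - y ^ 2))) y := by
    simpa using ((hasDerivAt_pow 2 y).const_sub 1).sqrt hpos.ne'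
  have hsum := (hs.sub ((hs.const_add 1).log (by positivity))).add (hasDerivAt_log hy0.ne')
  refine (hsum.congr_of_eventuallyEq ?_).congr_deriv ?_
  · filter_upwards [lt_mem_nhds hy0] with x hx using gKapteyn_eq hx
  · have hsq := sq_sqrt hpos.le
    have := sqrt_pos.2 hpos
    field_simp
    linear_combination -√(1 - y ^ 2) * hsq

lemma continuousOn_gKapteyn : ContinuousOn gKapteyn (Ioc 0 1) := by
  refine ContinuousOn.sub (by fun_prop) (ContinuousOn.log
    ((by fun_prop : ContinuousOn _ _).div continuousOn_id fun y hy => hy.1.ne') fun y hy => ?_)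
  exact (div_pos (by positivity) hy.1).ne'

lemma strictMonoOn_gKapteyn : StrictMonoOn gKapteyn (Ioc 0 1) := by
  refine strictMonoOn_of_deriv_pos (convex_Ioc 0 1) continuousOn_gKapteyn fun y hy => ?_
  rw [interior_Ioc] at hy
  rw [(hasDerivAt_gKapteyn hy).deriv]
  have : 0 < 1 - y ^ 2 := by nlinarith [hy.1, hy.2]
  exact div_pos (sqrt_pos.2 this) hy.1

lemma gKapteyn_one : gKapteyn 1 = 0 := by simp [gKapteyn]

lemma gKapteyn_neg {y : ℝ} (hy : y ∈ Ioo (0 : ℝ) 1) : gKapteyn y < 0 := by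
  simpa [gKapteyn_one] using strictMonoOn_gKapteyn ⟨hy.1, hy.2.le⟩ ⟨one_pos, le_rfl⟩ hy.2

lemma abs_gKapteyn_one_sub_add_le {h : ℝ} (h0 : 0 < h) (h8 : h ≤ 1 / 8) :
    |gKapteyn (1 - h) + 2 * √2 / 3 * h ^ (3 / 2 : ℝ)| ≤ 12 * h ^ 2 := by
  set s := √(1 - (1 - h) ^ 2)
  set a := √(2 * h)
  have hs2 : s ^ 2 = 2 * h - h ^ 2 := by
    rw [sq_sqrt (by nlinarith)]
    ring
  have ha2 : a ^ 2 = 2 * h := sq_sqrt (by positivity)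
  have hs0 : 0 ≤ s := sqrt_nonneg _
  have hsa : s ≤ a := sqrt_le_sqrt (by nlinarith)
  have ha : a ≤ 1 / 2 := by nlinarith [sqrt_nonneg (2 * h)]
  have hE1 := abs_le.1 (abs_log_one_add_sub_le hs0 (hsa.trans ha))
  have hE2 := abs_le.1 (abs_log_one_sub_add_le h0.le (by linarith))
  have hcube : a ^ 3 - s ^ 3 ≤ 3 * h ^ 2 := by
    nlinarith [pow_three_sub_pow_three_le hs0 hsa, sq_nonneg h]
  have hcube_nonneg : s ^ 3 ≤ a ^ 3 := pow_le_pow_left₀ hs0 hsa 3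
  have hs4 : s ^ 4 ≤ 4 * h ^ 2 := by nlinarith [sq_nonneg h]
  have hg : gKapteyn (1 - h) = s - log (1 + s) + log (1 - h) := gKapteyn_eq (by linarith)
  have hlead : 2 * √2 / 3 * h ^ (3 / 2 : ℝ) = a ^ 3 / 3 := by
    rw [← two_mul_sqrt_two_mul_rpow_three_halves h0.le]
    ring
  rw [abs_le, hg, hlead]
  constructor <;> linarith

lemma isBigO_gKapteyn_one_sub_add :
    (fun h : ℝ => gKapteyn (1 - h) + 2 * √2 / 3 * h ^ (3 / 2 : ℝ)) =O[𝓝[>] 0]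
      fun h => h ^ (2 : ℝ) := by
  refine IsBigO.of_bound 12 ?_
  filter_upwards [Ioc_mem_nhdsGT (by norm_num : (0 : ℝ) < 1 / 8)] with h ⟨h0, h8⟩
  rw [rpow_two, norm_eq_abs, norm_eq_abs, abs_of_nonneg (sq_nonneg h)]
  exact abs_gKapteyn_one_sub_add_le h0 h8

theorem stmt_14 :
    StrictMonoOn gKapteyn (Set.Ioc (0:ℝ) 1) ∧
    gKapteyn 1 = 0 ∧
    (∀ y ∈ Set.Ioo (0:ℝ) 1, gKapteyn y < 0) ∧
    (fun h : ℝ => gKapteyn (1 - h) + (2 * Real.sqrt 2 / 3) * h ^ (3/2 : ℝ))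
      =o[𝓝[>] (0:ℝ)] (fun h : ℝ => h ^ (3/2 : ℝ)) :=
  ⟨strictMonoOn_gKapteyn, gKapteyn_one, fun _ => gKapteyn_neg,
    isBigO_gKapteyn_one_sub_add.trans_isLittleO (isLittleO_rpow_rpow_nhdsGT_zero (by norm_num))⟩
end

section
/- Let (X, μ) be a finite measure space, (g_j)_{j∈ℕ} nonnegative integrable functions, γ_j > 0, and J(a) = inf_j γ_j ∫ a g_j dμ for a ∈ 𝒰̄ = {a ∈ L^∞(X;[0,1]) : ∫ a dμ = c}. Suppose a* maximizes J over 𝒰̄ and there exists N₀ ∈ ℕ such that inf_{j > N₀} γ_j ∫ a* g_j dμ > γ₁ ∫ g₁ dμ and J_N(a) := inf_{1≤j≤N} γ_j ∫ a g_j dμ satisfies J_N(a) ≤ γ₁ ∫ g₁ dμ for all a ∈ 𝒰̄ (as holds when ∫ g₁ dμ bounds γ₁ ∫ a g₁). If a^{N₀} is the unique maximizer of J_{N₀} over 𝒰̄, then J(a*) = J_{N₀}(a*) = J_{N₀}(a^{N₀}) = max_{a ∈ 𝒰̄} J(a); i.e. the truncated maximum equals the full maximum. -/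
/-!
On admissible densities `J = min J_{N₀} J_tail`, and both pieces are concave, being infima of
functionals that are linear on the convex set of admissible densities. At `a*` the truncated
part lies strictly below the tail, since `J_{N₀}(a*) ≤ γ₁ ∫ g₁ < J_tail(a*)`. A maximizer of
`min f g` at which `f < g` must maximize the concave function `f` itself; hence `a*` maximizes
`J_{N₀}`, which gives `J_{N₀}(a*) = J_{N₀}(a^{N₀})`, and `J(a*) = J_{N₀}(a*)` is the
maximum of `J`.
-/

open MeasureTheory

/-- Admissible densities on a measure space: measurable, `[0,1]`-valued, fixed integral `c`. -/
def Adm {X : Type*} [MeasurableSpace X] (μ : Measure X) (c : ℝ) (a : X → ℝ) : Prop :=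
  Measurable a ∧ (∀ x, a x ∈ Set.Icc (0:ℝ) 1) ∧ (∫ x, a x ∂μ) = c

/-- The full spectral criterion `J(a) = inf_j γ_j ∫ a g_j dμ`. -/
noncomputable def Jfull {X : Type*} [MeasurableSpace X] (μ : Measure X)
    (γ : ℕ+ → ℝ) (g : ℕ+ → X → ℝ) (a : X → ℝ) : ℝ :=
  ⨅ j : ℕ+, γ j * ∫ x, a x * g j x ∂μ

/-- The truncated spectral criterion `J_N(a) = inf_{1 ≤ j ≤ N} γ_j ∫ a g_j dμ`. -/
noncomputable def Jtrunc {X : Type*} [MeasurableSpace X] (μ : Measure X)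
    (γ : ℕ+ → ℝ) (g : ℕ+ → X → ℝ) (N : ℕ+) (a : X → ℝ) : ℝ :=
  ⨅ j : {j : ℕ+ // j ≤ N}, γ (j : ℕ+) * ∫ x, a x * g (j : ℕ+) x ∂μ

open Set Filter Topology

theorem ciInf_eq_min_ciInf_le_ciInf_lt {ι α : Type*} [LinearOrder ι] [OrderBot ι] [NoMaxOrder ι]
    [ConditionallyCompleteLinearOrder α] {f : ι → α} (hf : BddBelow (range f)) (N : ι) :
    ⨅ j, f j = min (⨅ j : {j // j ≤ N}, f j) (⨅ j : {j // N < j}, f j) := by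
  have : Nonempty {j // j ≤ N} := ⟨⟨⊥, bot_le⟩⟩
  have : Nonempty {j // N < j} := let ⟨j, hj⟩ := exists_gt N; ⟨⟨j, hj⟩⟩
  have hf_sub : ∀ p : ι → Prop, BddBelow (range fun j : {j // p j} => f j) :=
    fun p => hf.mono (range_comp_subset_range _ f)
  refine le_antisymm (le_min (le_ciInf fun j => ciInf_le hf j) (le_ciInf fun j => ciInf_le hf j))
    (le_ciInf fun j => ?_)
  rcases le_or_gt j N with hj | hj
  · exact (min_le_left _ _).trans (ciInf_le (hf_sub _) ⟨j, hj⟩)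
  · exact (min_le_right _ _).trans (ciInf_le (hf_sub _) ⟨j, hj⟩)

theorem ConcaveOn.ciInf {ι E : Type*} [Nonempty ι] [AddCommMonoid E] [Module ℝ E] {s : Set E}
    {f : ι → E → ℝ} (hf : ∀ i, ConcaveOn ℝ s (f i))
    (hbdd : ∀ x ∈ s, BddBelow (range fun i => f i x)) :
    ConcaveOn ℝ s fun x => ⨅ i, f i x := by
  refine ⟨(hf (Classical.arbitrary ι)).1, fun x hx y hy a b ha hb hab => le_ciInf fun i => ?_⟩
  calc a • (⨅ i, f i x) + b • (⨅ i, f i y) ≤ a • f i x + b • f i y := by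
        simp only [smul_eq_mul]
        gcongr
        exacts [ciInf_le (hbdd x hx) i, ciInf_le (hbdd y hy) i]
    _ ≤ f i (a • x + b • y) := (hf i).2 hx hy ha hb hab

/-- A small step from `x` towards a point `y` with `f y > f x` raises `f` and, by continuity,
keeps `g` above `f x`. -/
theorem ConcaveOn.isMaxOn_of_isMaxOn_min {E : Type*} [AddCommGroup E] [Module ℝ E] {s : Set E}
    {f g : E → ℝ} (hf : ConcaveOn ℝ s f) (hg : ConcaveOn ℝ s g) {x : E} (hx : x ∈ s)
    (hmax : IsMaxOn (fun y => min (f y) (g y)) s x) (hfg : f x < g x) : IsMaxOn f s x := by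
  intro y hy
  show f y ≤ f x
  by_contra! hxy
  have hg_near : ∀ᶠ t in 𝓝 (0 : ℝ), f x < (1 - t) * g x + t * g y :=
    (Continuous.tendsto' (by fun_prop) 0 (g x) (by simp)).eventually_const_lt hfg
  obtain ⟨t, ⟨hgt, ht1⟩, ht0 : 0 < t⟩ :=
    ((hg_near.and (eventually_lt_nhds one_pos)).filter_mono nhdsWithin_le_nhds
      |>.and self_mem_nhdsWithin).exists (f := 𝓝[>] (0 : ℝ))
  have h1t : 0 ≤ 1 - t := sub_nonneg.2 ht1.le
  have hf_conc := hf.2 hx hy h1t ht0.le (sub_add_cancel 1 t)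
  have hg_conc := hg.2 hx hy h1t ht0.le (sub_add_cancel 1 t)
  have hmin_le : min (f ((1 - t) • x + t • y)) (g ((1 - t) • x + t • y)) ≤ min (f x) (g x) :=
    hmax (hf.1 hx hy h1t ht0.le (sub_add_cancel 1 t))
  simp only [smul_eq_mul] at hf_conc hg_conc
  rw [min_eq_left hfg.le, min_le_iff] at hmin_le
  rcases hmin_le with h | h <;> nlinarith

section Admissible

variable {X : Type*} [MeasurableSpace X] {μ : Measure X} {c : ℝ} {a b h : X → ℝ}

theorem Adm.integrable_mul (ha : Adm μ c a) (hh : Integrable h μ) :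
    Integrable (fun x => a x * h x) μ :=
  hh.bdd_mul (c := 1) ha.1.aestronglyMeasurable <| ae_of_all _ fun x => by
    rw [Real.norm_eq_abs, abs_le]
    exact ⟨by linarith [(ha.2.1 x).1], (ha.2.1 x).2⟩

theorem Adm.integrable [IsFiniteMeasure μ] (ha : Adm μ c a) : Integrable a μ := by
  simpa using ha.integrable_mul (integrable_const (1 : ℝ))

theorem Adm.integral_smul_add_smul_mul (ha : Adm μ c a) (hb : Adm μ c b) (hh : Integrable h μ)
    (s t : ℝ) :
    ∫ x, (s • a + t • b) x * h x ∂μ = s * ∫ x, a x * h x ∂μ + t * ∫ x, b x * h x ∂μ := by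
  simp only [Pi.add_apply, Pi.smul_apply, smul_eq_mul, add_mul, mul_assoc]
  rw [integral_add ((ha.integrable_mul hh).const_mul s) ((hb.integrable_mul hh).const_mul t),
    integral_const_mul, integral_const_mul]

theorem convex_setOf_adm [IsFiniteMeasure μ] : Convex ℝ {a | Adm μ c a} := by
  intro a ha b hb s t hs ht hst
  refine ⟨(ha.1.const_smul s).add (hb.1.const_smul t),
    fun x => convex_Icc 0 1 (ha.2.1 x) (hb.2.1 x) hs ht hst, ?_⟩
  simp only [Pi.add_apply, Pi.smul_apply, smul_eq_mul]
  rw [integral_add (ha.integrable.const_mul s) (hb.integrable.const_mul t), integral_const_mul,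
    integral_const_mul, ha.2.2, hb.2.2, ← add_mul, hst, one_mul]

theorem concaveOn_const_mul_integral_mul [IsFiniteMeasure μ] (w : ℝ) (hh : Integrable h μ) :
    ConcaveOn ℝ {a | Adm μ c a} fun a => w * ∫ x, a x * h x ∂μ := by
  refine ⟨convex_setOf_adm, fun a ha b hb s t _ _ _ => le_of_eq ?_⟩
  dsimp only
  rw [Adm.integral_smul_add_smul_mul ha hb hh, smul_eq_mul, smul_eq_mul]
  ring

theorem Adm.const_mul_integral_mul_nonneg (ha : Adm μ c a) {w : ℝ} (hw : 0 ≤ w)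
    (hh : ∀ x, 0 ≤ h x) : 0 ≤ w * ∫ x, a x * h x ∂μ :=
  mul_nonneg hw <| integral_nonneg fun x => mul_nonneg (ha.2.1 x).1 (hh x)

variable {ι : Type*} {w : ι → ℝ} {H : ι → X → ℝ}

theorem Adm.bddBelow_range_const_mul_integral_mul (ha : Adm μ c a) (hw : ∀ i, 0 ≤ w i)
    (hH : ∀ i x, 0 ≤ H i x) : BddBelow (range fun i => w i * ∫ x, a x * H i x ∂μ) :=
  ⟨0, by rintro _ ⟨i, rfl⟩; exact ha.const_mul_integral_mul_nonneg (hw i) (hH i)⟩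

theorem concaveOn_ciInf_const_mul_integral_mul [IsFiniteMeasure μ] [Nonempty ι]
    (hw : ∀ i, 0 ≤ w i) (hH_nonneg : ∀ i x, 0 ≤ H i x) (hH : ∀ i, Integrable (H i) μ) :
    ConcaveOn ℝ {a | Adm μ c a} fun a => ⨅ i, w i * ∫ x, a x * H i x ∂μ :=
  ConcaveOn.ciInf (fun i => concaveOn_const_mul_integral_mul (w i) (hH i))
    fun _ ha => Adm.bddBelow_range_const_mul_integral_mul ha hw hH_nonneg

end Admissible

noncomputable def Jtail {X : Type*} [MeasurableSpace X] (μ : Measure X)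
    (γ : ℕ+ → ℝ) (g : ℕ+ → X → ℝ) (N : ℕ+) (a : X → ℝ) : ℝ :=
  ⨅ j : {j : ℕ+ // N < j}, γ (j : ℕ+) * ∫ x, a x * g (j : ℕ+) x ∂μ

section Criteria

variable {X : Type*} [MeasurableSpace X] {μ : Measure X} {c : ℝ} {γ : ℕ+ → ℝ} {g : ℕ+ → X → ℝ}

theorem Jfull_eq_min_Jtrunc_Jtail {a : X → ℝ} (ha : Adm μ c a) (hγ : ∀ j, 0 ≤ γ j)
    (hg_nonneg : ∀ j x, 0 ≤ g j x) (N : ℕ+) :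
    Jfull μ γ g a = min (Jtrunc μ γ g N a) (Jtail μ γ g N a) :=
  ciInf_eq_min_ciInf_le_ciInf_lt (ha.bddBelow_range_const_mul_integral_mul hγ hg_nonneg) N

variable [IsFiniteMeasure μ]

theorem concaveOn_Jtrunc (hγ : ∀ j, 0 ≤ γ j) (hg_nonneg : ∀ j x, 0 ≤ g j x)
    (hg : ∀ j, Integrable (g j) μ) (N : ℕ+) : ConcaveOn ℝ {a | Adm μ c a} (Jtrunc μ γ g N) :=
  have : Nonempty {j : ℕ+ // j ≤ N} := ⟨⟨⊥, bot_le⟩⟩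
  concaveOn_ciInf_const_mul_integral_mul (fun j => hγ j) (fun j => hg_nonneg j) fun j => hg j

theorem concaveOn_Jtail (hγ : ∀ j, 0 ≤ γ j) (hg_nonneg : ∀ j x, 0 ≤ g j x)
    (hg : ∀ j, Integrable (g j) μ) (N : ℕ+) : ConcaveOn ℝ {a | Adm μ c a} (Jtail μ γ g N) :=
  have : Nonempty {j : ℕ+ // N < j} := ⟨⟨N + 1, PNat.lt_add_right N 1⟩⟩
  concaveOn_ciInf_const_mul_integral_mul (fun j => hγ j) (fun j => hg_nonneg j) fun j => hg j

end Criteria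

theorem stmt_17_general {X : Type*} [MeasurableSpace X] (μ : Measure X) [IsFiniteMeasure μ]
    (g : ℕ+ → X → ℝ) (hgnn : ∀ j x, 0 ≤ g j x) (hgint : ∀ j, Integrable (g j) μ)
    (γ : ℕ+ → ℝ) (hγ : ∀ j, 0 < γ j) (c : ℝ)
    (astar : X → ℝ) (hastar : Adm μ c astar)
    (hmax : ∀ a, Adm μ c a → Jfull μ γ g a ≤ Jfull μ γ g astar)
    (N₀ : ℕ+)
    (htail : γ 1 * ∫ x, g 1 x ∂μ
      < ⨅ j : {j : ℕ+ // N₀ < j}, γ (j : ℕ+) * ∫ x, astar x * g (j : ℕ+) x ∂μ)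
    (hbound : ∀ a, Adm μ c a → Jtrunc μ γ g N₀ a ≤ γ 1 * ∫ x, g 1 x ∂μ)
    (aN : X → ℝ) (haN : Adm μ c aN)
    (haNmax : ∀ a, Adm μ c a → Jtrunc μ γ g N₀ a ≤ Jtrunc μ γ g N₀ aN) :
    Jfull μ γ g astar = Jtrunc μ γ g N₀ astar ∧
    Jtrunc μ γ g N₀ astar = Jtrunc μ γ g N₀ aN ∧
    Jfull μ γ g astar = ⨆ a : {a : X → ℝ // Adm μ c a}, Jfull μ γ g (a : X → ℝ) := by
  have hγ' : ∀ j, 0 ≤ γ j := fun j => (hγ j).le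
  have hsplit : ∀ a, Adm μ c a → Jfull μ γ g a = min (Jtrunc μ γ g N₀ a) (Jtail μ γ g N₀ a) :=
    fun a ha => Jfull_eq_min_Jtrunc_Jtail ha hγ' hgnn N₀
  have hfull_max : IsMaxOn (Jfull μ γ g) {a | Adm μ c a} astar := hmax
  have hmin_max : IsMaxOn (fun a => min (Jtrunc μ γ g N₀ a) (Jtail μ γ g N₀ a))
      {a | Adm μ c a} astar := fun a ha =>
    (hsplit a ha).symm.trans_le ((hmax a ha).trans_eq (hsplit astar hastar))
  have hlt : Jtrunc μ γ g N₀ astar < Jtail μ γ g N₀ astar := (hbound astar hastar).trans_lt htail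
  have htrunc_max : IsMaxOn (Jtrunc μ γ g N₀) {a | Adm μ c a} astar :=
    (concaveOn_Jtrunc hγ' hgnn hgint N₀).isMaxOn_of_isMaxOn_min
      (concaveOn_Jtail hγ' hgnn hgint N₀) hastar hmin_max hlt
  refine ⟨by rw [hsplit astar hastar, min_eq_left hlt.le],
    le_antisymm (haNmax astar hastar) (htrunc_max haN), ?_⟩
  exact (hfull_max.iSup_eq (s := {a | Adm μ c a}) hastar).symm

theorem stmt_17 {X : Type*} [MeasurableSpace X] (μ : Measure X) [IsFiniteMeasure μ]
    (g : ℕ+ → X → ℝ) (hgnn : ∀ j x, 0 ≤ g j x) (hgint : ∀ j, Integrable (g j) μ)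
    (γ : ℕ+ → ℝ) (hγ : ∀ j, 0 < γ j) (c : ℝ)
    (astar : X → ℝ) (hastar : Adm μ c astar)
    (hmax : ∀ a, Adm μ c a → Jfull μ γ g a ≤ Jfull μ γ g astar)
    (N₀ : ℕ+)
    (htail : γ 1 * ∫ x, g 1 x ∂μ
      < ⨅ j : {j : ℕ+ // N₀ < j}, γ (j : ℕ+) * ∫ x, astar x * g (j : ℕ+) x ∂μ)
    (hbound : ∀ a, Adm μ c a → Jtrunc μ γ g N₀ a ≤ γ 1 * ∫ x, g 1 x ∂μ)
    (aN : X → ℝ) (haN : Adm μ c aN)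
    (haNmax : ∀ a, Adm μ c a → Jtrunc μ γ g N₀ a ≤ Jtrunc μ γ g N₀ aN)
    (haNuniq : ∀ a, Adm μ c a →
      (∀ b, Adm μ c b → Jtrunc μ γ g N₀ b ≤ Jtrunc μ γ g N₀ a) → a =ᵐ[μ] aN) :
    Jfull μ γ g astar = Jtrunc μ γ g N₀ astar ∧
    Jtrunc μ γ g N₀ astar = Jtrunc μ γ g N₀ aN ∧
    Jfull μ γ g astar = ⨆ a : {a : X → ℝ // Adm μ c a}, Jfull μ γ g (a : X → ℝ) :=
  stmt_17_general μ g hgnn hgint γ hγ c astar hastar hmax N₀ htail hbound aN haN haNmax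
end
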